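/- For φ ∈ F² with S_φ bounded and v ∈ ℂ, conjugation by the Weyl operator translates the symbol of a singular integral operator: W_v S_φ W_{-v} = S_{φ(· - 2i Im v)}. In particular S_φ is vertical, i.e. W_h S_φ W_{-h} = S_φ for all h ∈ ℝ. -/

import Mathlib

open MeasureTheory Complex

/-- The Gaussian measure `dμ(z) = π⁻¹ e^{-|z|²} dz` on `ℂ`. -/
noncomputable def gaussianMeasure : Measure ℂ :=
  (volume : Measure ℂ).withDensity fun z => ENNReal.ofReal (Real.exp (-‖z‖ ^ 2) / Real.pi)

/-- The Weyl operator `W_v f(u) = e^{u·conj(v) - |v|²/2} f(u-v)`. -/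
noncomputable def Weyl (v : ℂ) (f : ℂ → ℂ) : ℂ → ℂ :=
  fun u => Complex.exp (u * (starRingEnd ℂ) v - (‖v‖ ^ 2 : ℝ) / 2) * f (u - v)

/-- The singular integral operator `S_φ f(z) = ∫ f(w) e^{z·conj(w)} φ(z - conj(w)) dμ(w)`. -/
noncomputable def singInt (φ : ℂ → ℂ) (f : ℂ → ℂ) : ℂ → ℂ :=
  fun z => ∫ w : ℂ, f w * Complex.exp (z * (starRingEnd ℂ) w) * φ (z - (starRingEnd ℂ) w)
    ∂gaussianMeasure


lemma gaussian_shift (G : ℂ → ℂ) (v : ℂ) :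
    ∫ w, G w ∂gaussianMeasure
      = ∫ w, ((Real.exp (‖w‖ ^ 2 - ‖w - v‖ ^ 2) : ℝ) : ℂ) * G (w - v)
          ∂gaussianMeasure := by
  have hmeas : Measurable fun z : ℂ => Real.toNNReal (Real.exp (-‖z‖ ^ 2) / Real.pi) :=
    (((continuous_norm.pow 2).neg.rexp.div_const _).measurable).real_toNNReal
  have hd : (fun z : ℂ => ENNReal.ofReal (Real.exp (-‖z‖ ^ 2) / Real.pi))
      = fun z : ℂ => ((Real.toNNReal (Real.exp (-‖z‖ ^ 2) / Real.pi) : NNReal) : ENNReal) :=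
    rfl
  rw [gaussianMeasure, hd, integral_withDensity_eq_integral_smul hmeas,
    integral_withDensity_eq_integral_smul hmeas]
  rw [← integral_sub_right_eq_self
    (fun w => Real.toNNReal (Real.exp (-‖w‖ ^ 2) / Real.pi) • G w) v]
  congr 1
  funext w
  have hpos : ∀ r : ℝ, 0 ≤ Real.exp r / Real.pi := fun r =>
    div_nonneg (Real.exp_nonneg r) Real.pi_pos.le
  rw [NNReal.smul_def, NNReal.smul_def, Real.coe_toNNReal _ (hpos _), Real.coe_toNNReal _ (hpos _),
    Complex.real_smul, Complex.real_smul]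
  rw [← mul_assoc, ← Complex.ofReal_mul]
  congr 2
  rw [div_mul_eq_mul_div, ← Real.exp_add]
  ring_nf

lemma ofReal_abs_sq (w : ℂ) : ((‖w‖ ^ 2 : ℝ) : ℂ) = w * (starRingEnd ℂ) w := by
  rw [Complex.sq_norm, Complex.mul_conj]

lemma weyl_conj_singInt_key (φ f : ℂ → ℂ) (v z : ℂ) :
    Weyl v (singInt φ (Weyl (-v) f)) z
      = singInt (fun u => φ (u - (v - (starRingEnd ℂ) v))) f z := by
  simp only [Weyl, singInt]
  rw [gaussian_shift, ← integral_const_mul]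
  refine integral_congr_ae (Filter.Eventually.of_forall fun w => ?_)
  simp only [map_neg, map_sub, norm_neg, sub_neg_eq_add, sub_add_cancel]
  have harg : z - v - ((starRingEnd ℂ) w - (starRingEnd ℂ) v)
      = z - (starRingEnd ℂ) w - (v - (starRingEnd ℂ) v) := by ring
  rw [harg, Complex.ofReal_exp, Complex.ofReal_sub, ofReal_abs_sq, ofReal_abs_sq]
  have hw : w - v + v = w := by ring
  rw [hw, ofReal_abs_sq (w - v)]
  simp only [map_sub]
  have hE : Complex.exp (z * (starRingEnd ℂ) v - v * (starRingEnd ℂ) v / 2) *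
      Complex.exp (w * (starRingEnd ℂ) w - (w - v) * ((starRingEnd ℂ) w - (starRingEnd ℂ) v)) *
      Complex.exp (-((w - v) * (starRingEnd ℂ) v) - v * (starRingEnd ℂ) v / 2) *
      Complex.exp ((z - v) * ((starRingEnd ℂ) w - (starRingEnd ℂ) v))
      = Complex.exp (z * (starRingEnd ℂ) w) := by
    rw [← Complex.exp_add, ← Complex.exp_add, ← Complex.exp_add]
    congr 1
    ring
  rw [← hE]
  ring_nf

/-- Conjugation by Weyl operators translates the symbol of a singular integral operator:
`W_v S_φ W_{-v} = S_{φ(· - 2i Im v)}`; in particular `S_φ` is vertical: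
`W_h S_φ W_{-h} = S_φ` for all real `h`. -/
theorem weyl_conj_singInt (φ : ℂ → ℂ) (hφ : Differentiable ℂ φ)
    (hφ2 : MemLp φ 2 gaussianMeasure)
    (hInt : ∀ (g : ℂ → ℂ), Differentiable ℂ g → MemLp g 2 gaussianMeasure → ∀ z : ℂ,
      Integrable (fun w : ℂ => g w * Complex.exp (z * (starRingEnd ℂ) w)
        * φ (z - (starRingEnd ℂ) w)) gaussianMeasure) :
    (∀ v : ℂ, ∀ f : ℂ → ℂ, Differentiable ℂ f → MemLp f 2 gaussianMeasure → ∀ z : ℂ,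
        Weyl v (singInt φ (Weyl (-v) f)) z
          = singInt (fun u => φ (u - 2 * Complex.I * ((v.im : ℝ) : ℂ))) f z) ∧
      ∀ h : ℝ, ∀ f : ℂ → ℂ, Differentiable ℂ f → MemLp f 2 gaussianMeasure → ∀ z : ℂ,
        Weyl (h : ℂ) (singInt φ (Weyl (-(h : ℂ)) f)) z = singInt φ f z := by
  constructor
  · intro v f _ _ z
    have h2 : 2 * Complex.I * ((v.im : ℝ) : ℂ) = v - (starRingEnd ℂ) v := by
      rw [Complex.sub_conj]; push_cast; ring
    rw [weyl_conj_singInt_key φ f v z]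
    simp only [h2]
  · intro h f _ _ z
    have := weyl_conj_singInt_key φ f (h : ℂ) z
    rw [this]
    have h0 : ((h : ℂ) - (starRingEnd ℂ) (h : ℂ)) = 0 := by
      rw [Complex.conj_ofReal]; ring
    simp only [h0, sub_zero]
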